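/- arXiv:1705.00085 — 5 statements merged into one kernel-verified Lean document; each statement's English description precedes it below -/
import Mathlib

section
/- Let n > 2 be an odd natural number, ξ = exp(2πi/n), and let λ ∈ ℂ be either transcendental over ℚ, or algebraic with degree over the field ℚ(ξ) at least n² − n + 1. Let c(λ) = (1, λ, λ², …, λ^{n−1}) ∈ ℂ^n. Then the family of 2n vectors {M^l c(λ) : l ∈ ℤ_n} ∪ {M^l D c(λ) : l ∈ ℤ_n} is a full spark frame: every subfamily of n of these 2n vectors is linearly independent, hence a basis of ℂ^n. -/
/-- `ξ = exp(2πi/n)`, a primitive `n`-th root of unity. -/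
noncomputable def xi (n : ℕ) : ℂ := Complex.exp (2 * Real.pi * Complex.I / n)

/-- The family of `2n` vectors `{M^l c(λ)} ∪ {M^l D c(λ)}` where
`c(λ) = (1, λ, …, λ^{n-1})`, `M = diag(1, ξ, …, ξ^{n-1})` and `D` is the reversal:
`(M^l c(λ))_j = ξ^{jl} λ^j` and `(M^l D c(λ))_j = ξ^{jl} λ^{(n-j) mod n}`. -/
noncomputable def lambdaOrbit (n : ℕ) (lam : ℂ) : Fin 2 × Fin n → Fin n → ℂ :=
  fun p j =>
    xi n ^ ((j : ℕ) * (p.2 : ℕ)) *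
      (if p.1 = 0 then lam ^ (j : ℕ) else lam ^ ((n - (j : ℕ)) % n))

/-- A family of `2n` vectors in `ℂⁿ` is a full spark frame (has the Haar property)
if every subfamily of `n` of the vectors is linearly independent. -/
def IsFullSpark (n : ℕ) (f : Fin 2 × Fin n → Fin n → ℂ) : Prop :=
  ∀ S : Finset (Fin 2 × Fin n), S.card = n →
    LinearIndependent ℂ (fun i : {x // x ∈ S} => f i.1)

open Polynomial Finset IntermediateField

/-!
Fix `n` of the vectors and replace `λ` by an indeterminate `X`: their determinant becomes a
polynomial `Q` over `ℚ(ξ)` of degree at most `n(n-1)`, so under either hypothesis on `λ` it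
suffices that `Q ≠ 0`. If `b` of the vectors come from the reflected family `M^l D c(λ)`, the
term of `Q` for a permutation has degree `∑ j + ∑_{j ∈ T} s(j)`, where `T` is the set of `b`
columns it matches with reflected rows and `s(j) = n - 2j` (`s(0) = 0`). Since `n` is odd,
`2b ≠ n`, and this degree is uniquely minimal (`2b < n`, `T` = the last `b` columns) or
uniquely maximal (`2b > n`, `T` = the first `b` columns). The coefficient of that extremal
degree is a block-diagonal determinant whose blocks are Vandermonde determinants in distinct
powers of `ξ`, hence nonzero.
-/

theorem Finset.sum_lt_sum_of_card_eq_of_separated {ι M : Type*} [DecidableEq ι] [AddCommGroup M]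
    [LinearOrder M] [IsOrderedAddMonoid M] {g : ι → M} {R T : Finset ι} (c : M)
    (hR : ∀ i ∈ R, g i ≤ c) (hRc : ∀ i ∉ R, c < g i) (hcard : #T = #R) (hne : T ≠ R) :
    ∑ i ∈ R, g i < ∑ i ∈ T, g i := by
  have hTR : (T \ R).Nonempty :=
    sdiff_nonempty.2 fun hsub => hne (eq_of_subset_of_card_le hsub hcard.ge)
  rw [← sub_pos, ← sum_sdiff_sub_sum_sdiff, sub_pos]
  calc ∑ i ∈ R \ T, g i ≤ #(R \ T) • c :=
        sum_le_card_nsmul _ _ _ fun i hi => hR i (mem_sdiff.1 hi).1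
    _ = ∑ i ∈ T \ R, c := by rw [sum_const, card_sdiff_comm hcard]
    _ < ∑ i ∈ T \ R, g i := sum_lt_sum_of_nonempty hTR fun i hi => hRc i (mem_sdiff.1 hi).2

theorem Finset.eq_zero_of_forall_sum_mul_pow_eq_zero {ι R : Type*} [CommRing R] [IsDomain R]
    {s : Finset ι} {u v : ι → R} (hu : Set.InjOn u s)
    (h : ∀ t < #s, ∑ i ∈ s, v i * u i ^ t = 0) : ∀ i ∈ s, v i = 0 := by
  let e := s.equivFin.symm
  have hv : (fun x => v (e x)) = 0 := by
    refine Matrix.eq_zero_of_forall_pow_sum_mul_pow_eq_zero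
      (f := fun x => u (e x)) (fun x y hxy => e.injective (Subtype.ext ?_)) fun t => ?_
    · exact hu (e x).2 (e y).2 hxy
    · rw [← h t t.2, ← s.sum_coe_sort]
      exact e.sum_comp fun i => v i * u i ^ (t : ℕ)
  intro i hi
  simpa using congrFun hv (e.symm ⟨i, hi⟩)

theorem Polynomial.natDegree_det_le {ι R : Type*} [Fintype ι] [DecidableEq ι] [CommRing R]
    (A : Matrix ι ι R[X]) {m : ℕ} (h : ∀ i j, (A i j).natDegree ≤ m) :
    A.det.natDegree ≤ Fintype.card ι * m := by
  rw [Matrix.det_apply]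
  refine natDegree_sum_le_of_forall_le _ _ fun σ _ => (natDegree_smul_le _ _).trans ?_
  refine (natDegree_prod_le _ _).trans ?_
  simpa using sum_le_sum fun j (_ : j ∈ univ) => h (σ j) j

theorem Polynomial.coeff_det_of_monomials {ι R : Type*} [Fintype ι] [DecidableEq ι]
    [CommRing R]
    (a : ι → ι → R) (d : ι → ι → ℕ) (D : ℕ) (P : ι → ι → Prop)
    [∀ i j, Decidable (P i j)]
    (hP : ∀ σ : Equiv.Perm ι, ∑ j, d (σ j) j = D ↔ ∀ j, P (σ j) j) :
    (Matrix.of fun i j => C (a i j) * X ^ d i j).det.coeff D =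
      (Matrix.of fun i j => if P i j then a i j else 0).det := by
  simp only [Matrix.det_apply, finsetSum_coeff, coeff_smul, Matrix.of_apply]
  refine sum_congr rfl fun σ _ => congrArg _ ?_
  rw [prod_mul_distrib, ← map_prod, prod_pow_eq_pow_sum, coeff_C_mul_X_pow]
  by_cases hσ : ∀ j, P (σ j) j
  · rw [if_pos ((hP σ).2 hσ).symm]
    exact prod_congr rfl fun j _ => (if_pos (hσ j)).symm
  · obtain ⟨j, hj⟩ := not_forall.1 hσ
    rw [if_neg fun h => hσ ((hP σ).1 h.symm), prod_eq_zero (mem_univ j) (if_neg hj)]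

variable {F : Type*} [Field F]

theorem Matrix.det_of_ite_pow_ne_zero {n k : ℕ} (u : Fin n → F) (q : Fin n → Prop)
    [DecidablePred q] (hu0 : ∀ i, u i ≠ 0) (hu₁ : Set.InjOn u {i | q i})
    (hu₂ : Set.InjOn u {i | ¬ q i}) (hk : #{i | q i} = k) :
    (Matrix.of fun i j : Fin n =>
      if (q i ↔ (j : ℕ) < k) then u i ^ (j : ℕ) else 0).det ≠ 0 := by
  rw [← isUnit_iff_ne_zero, ← Matrix.isUnit_iff_isUnit_det,
    ← Matrix.linearIndependent_rows_iff_isUnit, Fintype.linearIndependent_iff]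
  intro g hg
  have hcol (j : Fin n) :
      ∑ i, g i * (if (q i ↔ (j : ℕ) < k) then u i ^ (j : ℕ) else 0) = 0 := by
    simpa using congrFun hg j
  have hkn : k ≤ n := hk ▸ (card_filter_le _ _).trans_eq (card_fin n)
  have hk' : #{i | ¬ q i} = n - k := by
    have := card_filter_add_card_filter_not (s := univ) fun i => q i
    rw [card_univ, Fintype.card_fin] at this
    omega
  -- the columns `j < k` only meet the rows `q i`, the others only the rows `¬ q i`
  have h₁ : ∀ i ∈ ({i | q i} : Finset (Fin n)), g i = 0 := by
    refine eq_zero_of_forall_sum_mul_pow_eq_zero (by simpa using hu₁) fun t ht => ?_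
    rw [hk] at ht
    rw [sum_filter]
    refine (sum_congr rfl fun i _ => ?_).trans (hcol ⟨t, by omega⟩)
    by_cases hi : q i <;> simp [hi, ht]
  have h₂ : ∀ i ∈ ({i | ¬ q i} : Finset (Fin n)), g i * u i ^ k = 0 := by
    refine eq_zero_of_forall_sum_mul_pow_eq_zero (by simpa using hu₂) fun t ht => ?_
    rw [hk'] at ht
    rw [sum_filter]
    refine (sum_congr rfl fun i _ => ?_).trans (hcol ⟨k + t, by omega⟩)
    by_cases hi : q i <;> simp [hi, pow_add, mul_assoc]
  intro i
  by_cases hi : q i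
  · exact h₁ i (by simpa using hi)
  · simpa [hu0 i] using h₂ i (by simpa using hi)

def orbitExponent (n : ℕ) (t : Fin 2) (j : Fin n) : ℕ := if t = 0 then j else (n - j) % n

def orbitExponentShift (n : ℕ) (j : Fin n) : ℤ := if (j : ℕ) = 0 then 0 else n - 2 * j

section OrbitExponent

variable {n : ℕ}

theorem orbitExponent_le (t : Fin 2) (j : Fin n) : orbitExponent n t j ≤ n - 1 := by
  have := j.2
  unfold orbitExponent
  split_ifs
  · omega
  · have := Nat.mod_lt (n - j) (by omega : 0 < n)
    omega

theorem orbitExponent_one (j : Fin n) :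
    (orbitExponent n 1 j : ℤ) = j + orbitExponentShift n j := by
  have := j.2
  rw [orbitExponent, if_neg (by decide), orbitExponentShift]
  split_ifs with h
  · simp [h]
  · rw [Nat.mod_eq_of_lt (by omega)]
    omega

theorem sum_orbitExponent (ε : Fin n → Fin 2) :
    (∑ j, orbitExponent n (ε j) j : ℤ) =
      ∑ j : Fin n, (j : ℤ) + ∑ j ∈ {j | ε j = 1}, orbitExponentShift n j := by
  rw [sum_filter, ← sum_add_distrib]
  refine sum_congr rfl fun j _ => ?_
  obtain h | h : ε j = 0 ∨ ε j = 1 := by omega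
  · simp [h, orbitExponent]
  · simp [h, orbitExponent_one]

theorem sum_orbitExponent_eq_iff {R : Finset (Fin n)}
    (hR : ∀ T : Finset (Fin n), #T = #R →
      ∑ j ∈ T, orbitExponentShift n j = ∑ j ∈ R, orbitExponentShift n j → T = R)
    (ε : Fin n → Fin 2) (hε : #{j | ε j = 1} = #R) :
    ∑ j, orbitExponent n (ε j) j = ∑ j, orbitExponent n (if j ∈ R then 1 else 0) j ↔
      ∀ j, (ε j = 1 ↔ j ∈ R) := by
  constructor
  · intro h
    have hsum := congrArg (Nat.cast : ℕ → ℤ) h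
    push_cast at hsum
    rw [sum_orbitExponent, sum_orbitExponent] at hsum
    have hT := hR _ hε (by simpa using hsum)
    intro j
    simpa using congrArg (j ∈ ·) hT
  · intro h
    refine sum_congr rfl fun j _ => ?_
    by_cases hj : j ∈ R
    · simp [hj, (h j).2 hj]
    · have : ε j = 0 := by have := (h j).not.2 hj; omega
      simp [hj, this]

theorem orbitExponentShift_eq (j : Fin n) :
    orbitExponentShift n j = if (j : ℕ) = 0 then 0 else (n : ℤ) - 2 * j := rfl

theorem eq_of_sum_orbitExponentShift_eq_of_two_mul_lt {b : ℕ} (h : 2 * b < n)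
    {T : Finset (Fin n)} (hT : #T = #{j : Fin n | ¬ (j : ℕ) < n - b})
    (hsum : ∑ j ∈ T, orbitExponentShift n j =
      ∑ j ∈ {j : Fin n | ¬ (j : ℕ) < n - b}, orbitExponentShift n j) :
    T = ({j : Fin n | ¬ (j : ℕ) < n - b} : Finset (Fin n)) := by
  by_contra hne
  refine (sum_lt_sum_of_card_eq_of_separated (2 * b - n : ℤ) ?_ ?_ hT hne).ne hsum.symm
  all_goals
    intro j hj
    simp only [mem_filter, mem_univ, true_and, not_not] at hj
    rw [orbitExponentShift_eq]
    split_ifs <;> omega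

theorem eq_of_sum_orbitExponentShift_eq_of_lt_two_mul {b : ℕ} (h : n < 2 * b)
    {T : Finset (Fin n)} (hT : #T = #{j : Fin n | (j : ℕ) < b})
    (hsum : ∑ j ∈ T, orbitExponentShift n j =
      ∑ j ∈ {j : Fin n | (j : ℕ) < b}, orbitExponentShift n j) :
    T = ({j : Fin n | (j : ℕ) < b} : Finset (Fin n)) := by
  by_contra hne
  refine (sum_lt_sum_of_card_eq_of_separated (g := fun j => -orbitExponentShift n j)
    (2 * b - n - 1 : ℤ) ?_ ?_ hT hne).ne (by simp only [sum_neg_distrib, hsum])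
  all_goals
    intro j hj
    simp only [mem_filter, mem_univ, true_and] at hj
    rw [orbitExponentShift_eq]
    split_ifs <;> omega

theorem exists_sum_orbitExponent_eq_iff (hodd : Odd n) (ε : Fin n → Fin 2) :
    ∃ (t : Fin 2) (D : ℕ), ∀ σ : Equiv.Perm (Fin n),
      ∑ j, orbitExponent n (ε (σ j)) j = D ↔
        ∀ j, (ε (σ j) = t ↔ (j : ℕ) < #{i | ε i = t}) := by
  set b := #{i | ε i = 1}
  have hcard (σ : Equiv.Perm (Fin n)) : #{j | (ε ∘ σ) j = 1} = b :=
    card_nbij' σ σ.symm (fun j hj => by simpa using hj) (fun i hi => by simpa using hi)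
      (fun j _ => by simp) (fun i _ => by simp)
  have hbn : b ≤ n := (card_filter_le _ _).trans_eq (card_fin n)
  obtain h | h : 2 * b < n ∨ n < 2 * b := by obtain ⟨m, hm⟩ := hodd; omega
  · -- the degree is uniquely minimal when the reflected rows occupy the last `b` columns
    have hRcard : #{j : Fin n | ¬ (j : ℕ) < n - b} = b := by
      have := card_filter_add_card_filter_not (s := univ) fun j : Fin n => (j : ℕ) < n - b
      rw [Fin.card_filter_val_lt, card_univ, Fintype.card_fin] at this
      omega
    have hb0 : #{i | ε i = 0} = n - b := by
      have := card_filter_add_card_filter_not (s := univ) fun i => ε i = 1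
      have h01 : ∀ i, ¬ ε i = 1 ↔ ε i = 0 := fun i => by omega
      simp only [h01, card_univ, Fintype.card_fin] at this
      omega
    refine ⟨0, _, fun σ => (sum_orbitExponent_eq_iff
      (fun T hT => eq_of_sum_orbitExponentShift_eq_of_two_mul_lt h hT) (ε ∘ σ)
      (by rw [hcard, hRcard])).trans ?_⟩
    rw [hb0]
    refine forall_congr' fun j => ?_
    simp only [Function.comp_apply, mem_filter, mem_univ, true_and]
    omega
  · -- the degree is uniquely maximal when the reflected rows occupy the first `b` columns
    have hRcard : #{j : Fin n | (j : ℕ) < b} = b := by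
      rw [Fin.card_filter_val_lt]
      omega
    refine ⟨1, _, fun σ => (sum_orbitExponent_eq_iff
      (fun T hT => eq_of_sum_orbitExponentShift_eq_of_lt_two_mul h hT) (ε ∘ σ)
      (by rw [hcard, hRcard])).trans ?_⟩
    simp only [Function.comp_apply, mem_filter, mem_univ, true_and]
    rfl

end OrbitExponent

noncomputable def orbitPolyMatrix (n : ℕ) (ζ : F) (p : Fin n → Fin 2 × Fin n) :
    Matrix (Fin n) (Fin n) F[X] :=
  Matrix.of fun i j => C ((ζ ^ ((p i).2 : ℕ)) ^ (j : ℕ)) * X ^ orbitExponent n (p i).1 j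

section OrbitPolyMatrix

variable {n : ℕ}

theorem natDegree_det_orbitPolyMatrix_le (ζ : F) (p : Fin n → Fin 2 × Fin n) :
    (orbitPolyMatrix n ζ p).det.natDegree ≤ n * (n - 1) := by
  simpa using natDegree_det_le (orbitPolyMatrix n ζ p) fun i j =>
    (natDegree_C_mul_X_pow_le _ _).trans (orbitExponent_le (p i).1 j)

theorem det_orbitPolyMatrix_ne_zero (hodd : Odd n) {ζ : F} (hζ : IsPrimitiveRoot ζ n)
    {p : Fin n → Fin 2 × Fin n} (hp : Function.Injective p) :
    (orbitPolyMatrix n ζ p).det ≠ 0 := by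
  obtain ⟨t, D, hD⟩ := exists_sum_orbitExponent_eq_iff hodd fun i => (p i).1
  have hcoeff : (orbitPolyMatrix n ζ p).det.coeff D = _ :=
    coeff_det_of_monomials (fun i j : Fin n => (ζ ^ ((p i).2 : ℕ)) ^ (j : ℕ)) _ D
      (fun i j => (p i).1 = t ↔ (j : ℕ) < #{i | (p i).1 = t}) hD
  have hinj (i i' : Fin n) (h₁ : (p i).1 = (p i').1)
      (h₂ : ζ ^ ((p i).2 : ℕ) = ζ ^ ((p i').2 : ℕ)) : i = i' :=
    hp (Prod.ext h₁ (Fin.ext (hζ.pow_inj (p i).2.2 (p i').2.2 h₂)))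
  intro h0
  rw [h0, coeff_zero] at hcoeff
  refine Matrix.det_of_ite_pow_ne_zero _ (fun i => (p i).1 = t)
    (fun i => pow_ne_zero _ (hζ.ne_zero hodd.pos.ne')) ?_ ?_ rfl hcoeff.symm
  · exact fun i hi i' hi' => hinj i i' (hi.trans hi'.symm)
  · exact fun i hi i' hi' => hinj i i' (by simp only [Set.mem_ofPred_eq] at hi hi'; omega)

theorem aeval_det_orbitPolyMatrix {K : Type*} [Field K] [Algebra K ℂ] {ζ : K}
    (hζ : algebraMap K ℂ ζ = xi n) (lam : ℂ) (p : Fin n → Fin 2 × Fin n) :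
    aeval lam (orbitPolyMatrix n ζ p).det =
      (Matrix.of fun i j => lambdaOrbit n lam (p i) j).det := by
  rw [AlgHom.map_det]
  congr 1
  ext i j
  simp only [orbitPolyMatrix, lambdaOrbit, orbitExponent, AlgHom.mapMatrix_apply,
    Matrix.map_apply, Matrix.of_apply, map_mul, aeval_C, aeval_X, map_pow, hζ, ← pow_mul']
  split_ifs <;> rfl

end OrbitPolyMatrix

theorem IsFullSpark.of_linearIndependent_comp {n : ℕ} {f : Fin 2 × Fin n → Fin n → ℂ}
    (h : ∀ p : Fin n → Fin 2 × Fin n, Function.Injective p →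
      LinearIndependent ℂ (f ∘ p)) :
    IsFullSpark n f := by
  intro S hS
  let e : Fin n ≃ S := (S.equivFin.trans (finCongr hS)).symm
  exact (linearIndependent_equiv e).1 (h _ (Subtype.val_injective.comp e.injective))

theorem lambda_orbit_full_spark_of_transcendental_or_large_degree_general
    (n : ℕ) (hodd : Odd n) (lam : ℂ)
    (hlam : Transcendental ℚ lam ∨
      (IsAlgebraic (IntermediateField.adjoin ℚ {xi n} : IntermediateField ℚ ℂ) lam ∧
        n ^ 2 - n + 1 ≤
          (minpoly (IntermediateField.adjoin ℚ {xi n} : IntermediateField ℚ ℂ) lam).natDegree)) :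
    IsFullSpark n (lambdaOrbit n lam) := by
  have hξ : IsPrimitiveRoot (xi n) n := Complex.isPrimitiveRoot_exp n hodd.pos.ne'
  have : Algebra.IsAlgebraic ℚ ℚ⟮xi n⟯ :=
    isAlgebraic_adjoin_simple (hξ.isIntegral hodd.pos).tower_top
  have hgen := AdjoinSimple.algebraMap_gen ℚ (xi n)
  have hζ : IsPrimitiveRoot (AdjoinSimple.gen ℚ (xi n)) n :=
    .of_map_of_injective (by rwa [hgen]) (algebraMap ℚ⟮xi n⟯ ℂ).injective
  refine IsFullSpark.of_linearIndependent_comp fun p hp => ?_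
  have hQ := det_orbitPolyMatrix_ne_zero hodd hζ hp
  have hdet : (Matrix.of fun i j => lambdaOrbit n lam (p i) j).det ≠ 0 := by
    rw [← aeval_det_orbitPolyMatrix hgen]
    intro h0
    rcases hlam with htr | ⟨-, hdeg⟩
    · exact htr.extendScalars ℚ⟮xi n⟯ ⟨_, hQ, h0⟩
    · have := (natDegree_le_natDegree (minpoly.degree_le_of_ne_zero _ _ hQ h0)).trans
        (natDegree_det_orbitPolyMatrix_le _ p)
      rw [sq, ← Nat.mul_sub_one] at hdeg
      omega
  exact Matrix.linearIndependent_rows_iff_isUnit.2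
    ((Matrix.isUnit_iff_isUnit_det _).2 hdet.isUnit)

theorem lambda_orbit_full_spark_of_transcendental_or_large_degree
    (n : ℕ) (hn : 2 < n) (hodd : Odd n) (lam : ℂ)
    (hlam : Transcendental ℚ lam ∨
      (IsAlgebraic (IntermediateField.adjoin ℚ {xi n} : IntermediateField ℚ ℂ) lam ∧
        n ^ 2 - n + 1 ≤
          (minpoly (IntermediateField.adjoin ℚ {xi n} : IntermediateField ℚ ℂ) lam).natDegree)) :
    IsFullSpark n (lambdaOrbit n lam) :=
  lambda_orbit_full_spark_of_transcendental_or_large_degree_general n hodd lam hlam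
end

section
/- Let n > 2 be a natural number, ξ = exp(2πi/n), 0 < m < n, s = n − m. Let l_0, …, l_{m−1} be integers that are pairwise distinct modulo n, and j_0, …, j_{s−1} integers that are pairwise distinct modulo n. Let A₁(t) be the m×m matrix with entries A₁(t)_{a,b} = ξ^{b·l_a} t^b (0 ≤ a,b ≤ m−1) and A₄(t) the s×s matrix with entries A₄(t)_{a,c} = ξ^{(m+c)·j_a} t^{n−m−c} (0 ≤ a,c ≤ s−1). Set C = (∏_{a=0}^{s−1} ξ^{m·j_a}) · (∏_{0 ≤ k < ℓ ≤ s−1} (ξ^{j_ℓ} − ξ^{j_k})) · (∏_{0 ≤ k < j ≤ m−1} (ξ^{l_j} − ξ^{l_k})) and κ(n,m) = m(m−1)/2 + (n−m)(n−m+1)/2. Then det A₁(t) · det A₄(t) = C·t^{κ(n,m)} and C ≠ 0; in particular det A₁(t) · det A₄(t) is a nonzero monomial in ℂ[t]. -/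
open Polynomial

/-!
Both matrices factor as a constant matrix times a diagonal matrix of powers of `t`. The constant
factor of `A₁` is the Vandermonde matrix of the `ξ ^ l_a`, that of `A₄` is the Vandermonde matrix of
the `ξ ^ j_a` with its rows scaled by `ξ ^ (m j_a)`. The Vandermonde determinants are nonzero
because `ξ` is a primitive `n`-th root of unity and the exponents are distinct modulo `n`.
-/

open Finset Matrix

theorem Finset.prod_filter_fst_lt_snd {ι M : Type*} [Fintype ι] [LinearOrder ι]
    [LocallyFiniteOrderTop ι] [CommMonoid M] (f : ι → ι → M) :
    ∏ p ∈ univ.filter (fun p : ι × ι => p.1 < p.2), f p.1 p.2 = ∏ i, ∏ j ∈ Ioi i, f i j := by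
  rw [prod_filter, ← univ_product_univ, prod_product]
  refine prod_congr rfl fun i _ => ?_
  rw [← filter_lt_eq_Ioi, prod_filter]

theorem Matrix.det_vandermonde_eq_prod_filter_lt {R : Type*} [CommRing R] {k : ℕ}
    (v : Fin k → R) :
    (vandermonde v).det =
      ∏ p ∈ univ.filter (fun p : Fin k × Fin k => p.1 < p.2), (v p.2 - v p.1) := by
  rw [det_vandermonde, prod_filter_fst_lt_snd fun i j => v j - v i]

theorem Fin.sum_val (k : ℕ) : ∑ b : Fin k, (b : ℕ) = k * (k - 1) / 2 := by
  rw [Fin.sum_univ_eq_sum_range (fun i => i) k, sum_range_id]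

theorem Fin.sum_sub_val (k : ℕ) : ∑ c : Fin k, (k - c) = k * (k + 1) / 2 := by
  calc ∑ c : Fin k, (k - c) = ∑ c : Fin k, ((c : ℕ) + 1) :=
        Fintype.sum_equiv Fin.revPerm _ _ fun c => by
          simp only [Fin.revPerm_apply, Fin.val_rev]
          omega
    _ = ∑ c ∈ range (k + 1), c := by rw [sum_range_succ', Fin.sum_univ_eq_sum_range (· + 1)]; rfl
    _ = k * (k + 1) / 2 := by rw [sum_range_id, Nat.add_sub_cancel, mul_comm]

theorem Matrix.det_of_C_mul_X_pow {ι R : Type*} [Fintype ι] [DecidableEq ι] [CommRing R]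
    (f : ι → ι → R) (e : ι → ℕ) :
    (of fun a b => C (f a b) * X ^ e b).det = C (of f).det * X ^ ∑ b, e b := by
  have : (of fun a b => C (f a b) * X ^ e b) =
      (C : R →+* R[X]).mapMatrix (of f) * diagonal fun b => X ^ e b := by
    ext a b
    simp [mul_diagonal]
  rw [this, det_mul, ← RingHom.map_det, det_diagonal, prod_pow_eq_pow_sum]

theorem IsPrimitiveRoot.intCast_eq_of_zpow_eq {G₀ : Type*} [CommGroupWithZero G₀] {ζ : G₀}
    {k : ℕ} (h : IsPrimitiveRoot ζ k) (hk : k ≠ 0) {a b : ℤ} (hab : ζ ^ a = ζ ^ b) :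
    (a : ZMod k) = b := by
  rw [ZMod.intCast_eq_intCast_iff_dvd_sub, ← h.zpow_eq_one_iff_dvd, zpow_sub₀ (h.ne_zero hk), hab,
    div_self (zpow_ne_zero _ (h.ne_zero hk))]

theorem IsPrimitiveRoot.injective_zpow_comp {G₀ ι : Type*} [CommGroupWithZero G₀] {ζ : G₀}
    {k : ℕ} (h : IsPrimitiveRoot ζ k) (hk : k ≠ 0) {f : ι → ℤ}
    (hf : Function.Injective fun a => (f a : ZMod k)) : Function.Injective fun a => ζ ^ f a :=
  fun _ _ hab => hf (h.intCast_eq_of_zpow_eq hk hab)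

theorem Matrix.of_zpow_mul_eq_vandermonde {K : Type*} [Field K] {k : ℕ} (x : K)
    (v : Fin k → ℤ) :
    of (fun a b : Fin k => x ^ (((b : ℕ) : ℤ) * v a)) = vandermonde fun a => x ^ v a := by
  ext a b
  rw [of_apply, vandermonde_apply, mul_comm, _root_.zpow_mul, zpow_natCast]

theorem Matrix.of_zpow_add_mul_eq_diagonal_mul_vandermonde {K : Type*} [Field K] {k : ℕ}
    {x : K} (hx : x ≠ 0) (m : ℤ) (v : Fin k → ℤ) :
    of (fun a b : Fin k => x ^ ((m + ((b : ℕ) : ℤ)) * v a)) =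
      diagonal (fun a => x ^ (m * v a)) * vandermonde fun a => x ^ v a := by
  rw [← of_zpow_mul_eq_vandermonde]
  ext a b
  rw [diagonal_mul, of_apply, of_apply, add_mul, zpow_add₀ hx]

theorem det_A1_mul_det_A4_general (n : ℕ) (hn : 2 < n) (m : ℕ)
    (l : Fin m → ℤ) (j : Fin (n - m) → ℤ)
    (hl : ∀ a b : Fin m, a ≠ b → ((l a : ZMod n) ≠ (l b : ZMod n)))
    (hj : ∀ a b : Fin (n - m), a ≠ b → ((j a : ZMod n) ≠ (j b : ZMod n)))
    (Cval : ℂ)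
    (hC : Cval = (∏ a, xi n ^ ((m : ℤ) * j a)) *
        (∏ p ∈ Finset.univ.filter (fun p : Fin (n - m) × Fin (n - m) => p.1 < p.2),
          (xi n ^ j p.2 - xi n ^ j p.1)) *
        (∏ p ∈ Finset.univ.filter (fun p : Fin m × Fin m => p.1 < p.2),
          (xi n ^ l p.2 - xi n ^ l p.1))) :
    (Matrix.of fun a b : Fin m =>
        (Polynomial.C (xi n ^ (((b : ℕ) : ℤ) * l a)) * X ^ (b : ℕ) : ℂ[X])).det *
      (Matrix.of fun a c : Fin (n - m) =>
        (Polynomial.C (xi n ^ (((m : ℤ) + ((c : ℕ) : ℤ)) * j a)) * X ^ (n - m - (c : ℕ)) : ℂ[X])).det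
      = Polynomial.C Cval * X ^ (m * (m - 1) / 2 + (n - m) * (n - m + 1) / 2)
      ∧ Cval ≠ 0 := by
  have hn0 : n ≠ 0 := by omega
  have hξ : IsPrimitiveRoot (xi n) n := Complex.isPrimitiveRoot_exp n hn0
  rw [← det_vandermonde_eq_prod_filter_lt fun a => xi n ^ j a,
    ← det_vandermonde_eq_prod_filter_lt fun a => xi n ^ l a] at hC
  subst hC
  refine ⟨?_, ?_⟩
  · rw [det_of_C_mul_X_pow, det_of_C_mul_X_pow, of_zpow_mul_eq_vandermonde,
      of_zpow_add_mul_eq_diagonal_mul_vandermonde (hξ.ne_zero hn0), det_mul, det_diagonal,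
      Fin.sum_val, Fin.sum_sub_val, pow_add]
    simp only [map_mul]
    ring
  · refine mul_ne_zero (mul_ne_zero ?_ ?_) ?_
    · exact prod_ne_zero_iff.mpr fun a _ => zpow_ne_zero _ (hξ.ne_zero hn0)
    · exact det_vandermonde_ne_zero_iff.mpr
        (hξ.injective_zpow_comp hn0 fun a b => not_imp_not.mp (hj a b))
    · exact det_vandermonde_ne_zero_iff.mpr
        (hξ.injective_zpow_comp hn0 fun a b => not_imp_not.mp (hl a b))

theorem det_A1_mul_det_A4 (n : ℕ) (hn : 2 < n) (m : ℕ) (hm0 : 0 < m) (hm : m < n)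
    (l : Fin m → ℤ) (j : Fin (n - m) → ℤ)
    (hl : ∀ a b : Fin m, a ≠ b → ((l a : ZMod n) ≠ (l b : ZMod n)))
    (hj : ∀ a b : Fin (n - m), a ≠ b → ((j a : ZMod n) ≠ (j b : ZMod n)))
    (Cval : ℂ)
    (hC : Cval = (∏ a, xi n ^ ((m : ℤ) * j a)) *
        (∏ p ∈ Finset.univ.filter (fun p : Fin (n - m) × Fin (n - m) => p.1 < p.2),
          (xi n ^ j p.2 - xi n ^ j p.1)) *
        (∏ p ∈ Finset.univ.filter (fun p : Fin m × Fin m => p.1 < p.2),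
          (xi n ^ l p.2 - xi n ^ l p.1))) :
    (Matrix.of fun a b : Fin m =>
        (Polynomial.C (xi n ^ (((b : ℕ) : ℤ) * l a)) * X ^ (b : ℕ) : ℂ[X])).det *
      (Matrix.of fun a c : Fin (n - m) =>
        (Polynomial.C (xi n ^ (((m : ℤ) + ((c : ℕ) : ℤ)) * j a)) * X ^ (n - m - (c : ℕ)) : ℂ[X])).det
      = Polynomial.C Cval * X ^ (m * (m - 1) / 2 + (n - m) * (n - m + 1) / 2)
      ∧ Cval ≠ 0 :=
  det_A1_mul_det_A4_general n hn m l j hl hj Cval hC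
end

section
/- Let n be an odd natural number, let 0 < m < n, let A = {0, 1, …, m−1}, and let B ⊆ {0, 1, …, n−1} with |B| = m and B ≠ A. Define ι(k) = (n−k) mod n. Then Σ_{k ∈ A∖B} ι(k) + Σ_{k ∈ B∖A} k ≠ Σ_{k ∈ A∖B} k + Σ_{k ∈ B∖A} ι(k). -/
/-!
For `0 < k < n` we have `ι(k) + k = n`, while `ι(0) + 0 = 0`. Put `D = A \ B` and `E = B \ A`; they
have the same size `d ≥ 1`, `E` avoids `0`, and every element of `D` is smaller than every element
of `E`, so `∑ D < ∑ E`. Adding `∑ D + ∑ E` to both sides, the claimed equality becomes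
`n·#(D \ {0}) + 2 ∑ E = n·d + 2 ∑ D`. Since `∑ D < ∑ E`, this forces `0 ∈ D` and then
`2 ∑ E = n + 2 ∑ D`, impossible for odd `n`.
-/

open Finset

theorem Finset.sum_lt_sum_of_card_eq_of_lt_of_le {ι M : Type*} [AddCommMonoid M] [PartialOrder M]
    [IsOrderedCancelAddMonoid M] {s t : Finset ι} {f : ι → M} (c : M) (hst : #s = #t)
    (hs : s.Nonempty) (hlt : ∀ i ∈ s, f i < c) (hle : ∀ j ∈ t, c ≤ f j) :
    ∑ i ∈ s, f i < ∑ j ∈ t, f j :=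
  calc ∑ i ∈ s, f i < ∑ _i ∈ s, c := sum_lt_sum_of_nonempty hs hlt
    _ = #t • c := by rw [sum_const, hst]
    _ ≤ ∑ j ∈ t, f j := card_nsmul_le_sum t f c hle

theorem Nat.sub_mod_self_add_of_pos {n k : ℕ} (hk : 0 < k) (hkn : k < n) : (n - k) % n + k = n := by
  rw [Nat.mod_eq_of_lt (by omega)]
  omega

theorem Nat.sum_sub_mod_self_add {n : ℕ} {s : Finset ℕ} (hs : ∀ k ∈ s, k < n) :
    ∑ k ∈ s, ((n - k) % n + k) = n * #(s.erase 0) := by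
  rw [← sum_erase s (a := 0) (by simp), sum_congr rfl fun k hk ↦
    Nat.sub_mod_self_add_of_pos (Nat.pos_of_ne_zero (ne_of_mem_erase hk)) (hs k (mem_of_mem_erase hk)),
    sum_const, smul_eq_mul, mul_comm]

theorem sum_iota_ne (n : ℕ) (hodd : Odd n) (m : ℕ) (hm0 : 0 < m) (hm : m < n)
    (B : Finset ℕ) (hB : B ⊆ Finset.range n) (hcard : B.card = m)
    (hne : B ≠ Finset.range m) :
    (∑ k ∈ Finset.range m \ B, (n - k) % n) + ∑ k ∈ B \ Finset.range m, k
      ≠ (∑ k ∈ Finset.range m \ B, k) + ∑ k ∈ B \ Finset.range m, (n - k) % n := by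
  set D := range m \ B
  set E := B \ range m
  have hDE : #D = #E := card_sdiff_eq_card_sdiff_iff.mpr (by rw [card_range, hcard])
  have hD : D.Nonempty := sdiff_nonempty.mpr fun hAB ↦
    hne (eq_of_subset_of_card_le hAB (by rw [card_range, hcard])).symm
  have hlt : ∑ k ∈ D, k < ∑ k ∈ E, k := sum_lt_sum_of_card_eq_of_lt_of_le m hDE hD
    (fun k hk ↦ mem_range.mp (mem_sdiff.mp hk).1)
    (fun k hk ↦ not_lt.mp fun h ↦ (mem_sdiff.mp hk).2 (mem_range.mpr h))
  have hDsum : ∑ k ∈ D, ((n - k) % n + k) = n * #(D.erase 0) :=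
    Nat.sum_sub_mod_self_add fun k hk ↦ (mem_range.mp (mem_sdiff.mp hk).1).trans hm
  have hEsum : ∑ k ∈ E, ((n - k) % n + k) = n * #D := by
    rw [Nat.sum_sub_mod_self_add fun k hk ↦ mem_range.mp (hB (mem_sdiff.mp hk).1), hDE,
      erase_eq_of_notMem fun h0 ↦ (mem_sdiff.mp h0).2 (mem_range.mpr hm0)]
  rw [sum_add_distrib] at hDsum hEsum
  intro h
  have hmul_lt : n * #(D.erase 0) < n * #D := by omega
  have herase : #(D.erase 0) + 1 = #D := by
    have hlt_card := Nat.lt_of_mul_lt_mul_left hmul_lt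
    have hle_card := pred_card_le_card_erase (s := D) (a := 0)
    omega
  have hnD : n * #D = n * #(D.erase 0) + n := by rw [← herase, mul_add_one]
  obtain ⟨t, ht⟩ := hodd
  omega
end

section
/- Let n > 2 be an odd natural number, ξ = exp(2πi/n), and ι(c) = (n−c) mod n. Consider the 2n×n matrix A(c(t)) over ℂ[t] whose rows, indexed by (ε, l) ∈ {0,1} × ℤ_n, are given by: row (0, l) has entries ξ^{c·l} t^c and row (1, l) has entries ξ^{c·l} t^{ι(c)}, for 0 ≤ c ≤ n−1. Then for every choice of n distinct rows of A(c(t)), the determinant of the resulting n×n matrix is a nonzero polynomial in ℂ[t]. -/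
/-!
Every entry of a minor is a monomial `C (ξ ^ (c * l)) * X ^ e`, so each permutation contributes a
single monomial, of degree `∑ c` plus `∑ (ι c - c)` over the set `C_σ` of columns met by rows of
type `1`. For odd `n` the weights `ι c - c` (namely `0` at `c = 0` and `n - 2c` otherwise) are
pairwise distinct, and the `b` columns of largest weight, `b` being the number of rows of type `1`,
form a cyclic interval `T`. Hence the coefficient of the largest possible degree only sees the
permutations matching the type-`1` rows with `T` and the type-`0` rows with its complement: it is
the determinant of a block-diagonal matrix whose blocks are Vandermonde matrices in distinct `n`-th
roots of unity, up to diagonal factors, hence nonzero.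
-/

open Polynomial

open Finset

theorem Finset.sum_lt_sum_of_card_eq_of_forall_lt {α β : Type*} [DecidableEq α]
    [AddCommMonoid β] [LinearOrder β] [IsOrderedCancelAddMonoid β] {f : α → β}
    {s t : Finset α} (hcard : #t = #s) (hne : t ≠ s) (h : ∀ x ∈ s, ∀ y ∉ s, f y < f x) :
    ∑ x ∈ t, f x < ∑ x ∈ s, f x := by
  have hst : (s \ t).Nonempty := by
    rw [nonempty_iff_ne_empty, Ne, sdiff_eq_empty_iff_subset]
    exact fun hsub => hne (eq_of_subset_of_card_le hsub hcard.le).symm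
  have hcard' : #(t \ s) = #(s \ t) := card_sdiff_comm hcard
  obtain ⟨y₀, hy₀, hmax⟩ :=
    (t \ s).exists_max_image f (by rw [← card_pos, hcard']; exact hst.card_pos)
  calc ∑ x ∈ t, f x = ∑ x ∈ t ∩ s, f x + ∑ x ∈ t \ s, f x := (sum_inter_add_sum_sdiff t s f).symm
    _ ≤ ∑ x ∈ s ∩ t, f x + ∑ _x ∈ s \ t, f y₀ := by
      rw [inter_comm, sum_const, ← hcard']
      exact add_le_add_right (sum_le_card_nsmul _ _ _ hmax) _
    _ < ∑ x ∈ s ∩ t, f x + ∑ x ∈ s \ t, f x := by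
      refine add_lt_add_right (sum_lt_sum_of_nonempty hst fun x hx => ?_) _
      exact h x (mem_sdiff.1 hx).1 y₀ (mem_sdiff.1 hy₀).2
    _ = ∑ x ∈ s, f x := sum_inter_add_sum_sdiff s t f

theorem sum_ite_perm_mem_eq_iff {ι : Type*} [Fintype ι] [DecidableEq ι] {f₀ f₁ : ι → ℕ}
    {S T : Finset ι} (hcard : #S = #T) (hT : ∀ x ∈ T, ∀ y ∉ T, f₁ y + f₀ x < f₁ x + f₀ y)
    (σ : Equiv.Perm ι) :
    ∑ i, (if σ i ∈ S then f₁ i else f₀ i) = ∑ i, (if i ∈ T then f₁ i else f₀ i) ↔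
      ∀ i, (σ i ∈ S ↔ i ∈ T) := by
  set U := S.map σ.symm.toEmbedding
  have hU : ∀ i, i ∈ U ↔ σ i ∈ S := fun i => by simp [U, mem_map_equiv]
  have hsum : ∀ V : Finset ι, ((∑ i, (if i ∈ V then f₁ i else f₀ i) : ℕ) : ℤ) =
      ∑ i, (f₀ i : ℤ) + ∑ i ∈ V, ((f₁ i : ℤ) - f₀ i) := fun V => by
    push_cast
    rw [← univ_inter V, ← sum_ite_mem, ← sum_add_distrib, univ_inter]
    exact sum_congr rfl fun i _ => by split_ifs <;> ring
  refine ⟨fun h => ?_, fun h => sum_congr rfl fun i _ => by simp only [h]⟩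
  suffices U = T by simpa [← hU, Finset.ext_iff] using this
  by_contra hne
  have hlt := sum_lt_sum_of_card_eq_of_forall_lt (f := fun i => (f₁ i : ℤ) - f₀ i)
    (by rw [card_map, hcard]) hne fun x hx y hy => by have := hT x hx y hy; omega
  have hcast := congrArg (Nat.cast : ℕ → ℤ) h
  simp only [← hU] at hcast
  rw [hsum, hsum] at hcast
  omega

theorem Matrix.coeff_det_of_C_mul_X_pow {ι R : Type*} [Fintype ι] [DecidableEq ι] [CommRing R]
    (g : Matrix ι ι R) (e : ι → ι → ℕ) (P : ι → ι → Prop) [∀ k i, Decidable (P k i)] (d : ℕ)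
    (hP : ∀ σ : Equiv.Perm ι, ∑ i, e (σ i) i = d ↔ ∀ i, P (σ i) i) :
    (Matrix.of fun k i => C (g k i) * X ^ e k i).det.coeff d =
      (Matrix.of fun k i => if P k i then g k i else 0).det := by
  simp only [Matrix.det_apply, Matrix.of_apply, finsetSum_coeff, coeff_smul]
  refine sum_congr rfl fun σ _ => congrArg _ ?_
  rw [prod_mul_distrib, ← map_prod, prod_pow_eq_pow_sum, coeff_C_mul_X_pow]
  by_cases hσ : ∀ i, P (σ i) i
  · rw [if_pos ((hP σ).2 hσ).symm]
    exact prod_congr rfl fun i _ => (if_pos (hσ i)).symm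
  · obtain ⟨i, hi⟩ := not_forall.1 hσ
    rw [if_neg (fun h => hσ ((hP σ).1 h.symm)), prod_eq_zero (mem_univ i) (if_neg hi)]

theorem Matrix.det_ite_mem_iff_ne_zero {ι κ₁ κ₂ R : Type*} [Fintype ι] [DecidableEq ι]
    [Fintype κ₁] [DecidableEq κ₁] [Fintype κ₂] [DecidableEq κ₂] [CommRing R] [IsDomain R]
    (g : Matrix ι ι R) {S T : Finset ι} (eR eC : κ₁ ⊕ κ₂ ≃ ι)
    (hR : ∀ k, eR k ∈ S ↔ k.isLeft) (hC : ∀ k, eC k ∈ T ↔ k.isLeft)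
    (h₁ : (Matrix.of fun p q => g (eR (.inl p)) (eC (.inl q))).det ≠ 0)
    (h₂ : (Matrix.of fun p q => g (eR (.inr p)) (eC (.inr q))).det ≠ 0) :
    (Matrix.of fun k i => if (k ∈ S ↔ i ∈ T) then g k i else 0).det ≠ 0 := by
  set G := Matrix.of fun k i => if (k ∈ S ↔ i ∈ T) then g k i else 0
  have hblocks : G.submatrix eR eC = Matrix.fromBlocks
      (Matrix.of fun p q => g (eR (.inl p)) (eC (.inl q))) 0 0
      (Matrix.of fun p q => g (eR (.inr p)) (eC (.inr q))) := by
    ext (p | p) (q | q) <;> simp [G, hR, hC]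
  have hdet := Matrix.det_reindex eR.symm eC.symm G
  rw [Matrix.reindex_apply, Equiv.symm_symm, Equiv.symm_symm, hblocks,
    Matrix.det_fromBlocks_zero₂₁] at hdet
  intro h0
  rw [h0, mul_zero] at hdet
  exact mul_ne_zero h₁ h₂ hdet

theorem IsPrimitiveRoot.det_pow_mod_mul_ne_zero {R : Type*} [CommRing R] [IsDomain R] {ζ : R}
    {n m : ℕ} (hζ : IsPrimitiveRoot ζ n) (a : ℕ) {l : Fin m → Fin n}
    (hl : Function.Injective l) :
    (Matrix.of fun p q : Fin m => ζ ^ ((a + q) % n * l p)).det ≠ 0 := by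
  set x : Fin m → R := fun p => ζ ^ (l p : ℕ)
  have hx : Function.Injective x := fun p p' h => hl (Fin.ext (hζ.pow_inj (l p).2 (l p').2 h))
  have hfac : (Matrix.of fun p q : Fin m => ζ ^ ((a + q) % n * l p)) =
      Matrix.diagonal (fun p => x p ^ a) * Matrix.vandermonde x := by
    ext p q
    have hxn : x p ^ n = 1 := by rw [← pow_mul, mul_comm, pow_mul, hζ.pow_eq_one, one_pow]
    rw [Matrix.diagonal_mul, Matrix.of_apply, Matrix.vandermonde_apply, mul_comm, pow_mul,
      ← pow_eq_pow_mod _ hxn, pow_add]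
  rw [hfac, Matrix.det_mul, Matrix.det_diagonal]
  refine mul_ne_zero (prod_ne_zero_iff.2 fun p _ => pow_ne_zero _ ?_)
    (Matrix.det_vandermonde_ne_zero_iff.2 hx)
  exact pow_ne_zero _ (hζ.ne_zero (Fin.pos (l p)).ne')

theorem Finset.exists_sumEquiv_isLeft_iff_mem {α : Type*} [Fintype α] [DecidableEq α]
    (S : Finset α) {m : ℕ} (hm : Fintype.card α = m) :
    ∃ e : Fin #S ⊕ Fin (m - #S) ≃ α, ∀ k, e k ∈ S ↔ k.isLeft := by
  have hcompl : Fintype.card {x // x ∉ S} = m - #S := by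
    rw [Fintype.card_subtype_compl, Fintype.card_coe, hm]
  refine ⟨(Equiv.sumCongr S.equivFin.symm (Fintype.equivFinOfCardEq hcompl).symm).trans
    (Equiv.sumCompl (· ∈ S)), ?_⟩
  rintro (p | r)
  · simp
  · simpa using ((Fintype.equivFinOfCardEq hcompl).symm r).2

theorem Nat.mod_eq_ite_of_le {x n : ℕ} (h : x ≤ n) : x % n = if x = n then 0 else x := by
  split_ifs with hx
  · rw [hx, Nat.mod_self]
  · exact Nat.mod_eq_of_lt (lt_of_le_of_ne h hx)

theorem sub_mod_add_lt_of_odd {n a b q r : ℕ} (hodd : Odd n) (hb : b ≤ n)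
    (ha : a = if 2 * b < n then 1 else 0) (hq : q < b) (hr : r < n - b) :
    (n - (a + b + r) % n) % n + (a + q) % n < (n - (a + q) % n) % n + (a + b + r) % n := by
  obtain ⟨k, rfl⟩ := hodd
  have hx : a + q ≤ 2 * k + 1 := by split_ifs at ha <;> omega
  have hy : a + b + r ≤ 2 * k + 1 := by split_ifs at ha <;> omega
  rw [Nat.mod_eq_ite_of_le hx, Nat.mod_eq_ite_of_le hy, Nat.mod_eq_ite_of_le (Nat.sub_le _ _),
    Nat.mod_eq_ite_of_le (Nat.sub_le _ _)]
  split_ifs at ha ⊢ <;> omega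

def cyclicSumEquiv (n a b : ℕ) [NeZero n] (hb : b ≤ n) : Fin b ⊕ Fin (n - b) ≃ Fin n :=
  (finSumFinEquiv.trans (finCongr (Nat.add_sub_cancel' hb))).trans (Equiv.addLeft (Fin.ofNat n a))

def cyclicInterval (n a b : ℕ) [NeZero n] (hb : b ≤ n) : Finset (Fin n) :=
  univ.map (Function.Embedding.inl.trans (cyclicSumEquiv n a b hb).toEmbedding)

section cyclicInterval

variable {n a b : ℕ} [NeZero n] {hb : b ≤ n}

theorem cyclicSumEquiv_inl (q : Fin b) :
    (cyclicSumEquiv n a b hb (.inl q) : ℕ) = (a + q) % n := by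
  simp [cyclicSumEquiv, Fin.val_add]

theorem cyclicSumEquiv_inr (r : Fin (n - b)) :
    (cyclicSumEquiv n a b hb (.inr r) : ℕ) = (a + b + r) % n := by
  simp [cyclicSumEquiv, Fin.val_add, add_assoc]

theorem card_cyclicInterval : #(cyclicInterval n a b hb) = b := by
  simp [cyclicInterval]

theorem cyclicSumEquiv_mem_cyclicInterval_iff (k : Fin b ⊕ Fin (n - b)) :
    cyclicSumEquiv n a b hb k ∈ cyclicInterval n a b hb ↔ k.isLeft := by
  rcases k with q | r <;> simp [cyclicInterval]

/-- For this choice of `a`, `cyclicInterval n a b hb` is the set of the `b` columns `c` of largest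
weight `ι c - c`. -/
theorem sub_mod_add_lt_of_mem_cyclicInterval (hodd : Odd n)
    (ha : a = if 2 * b < n then 1 else 0) {x y : Fin n} (hx : x ∈ cyclicInterval n a b hb)
    (hy : y ∉ cyclicInterval n a b hb) : (n - y) % n + x < (n - x) % n + y := by
  set e := cyclicSumEquiv n a b hb
  obtain ⟨q, rfl⟩ : ∃ q, e (.inl q) = x := by simpa [cyclicInterval] using hx
  obtain ⟨r, rfl⟩ : ∃ r, e (.inr r) = y := by
    rcases h : e.symm y with q | r
    · refine absurd ((cyclicSumEquiv_mem_cyclicInterval_iff (a := a) (hb := hb) (.inl q)).2 rfl) ?_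
      rwa [← h, Equiv.apply_symm_apply]
    · exact ⟨r, by rw [← h, Equiv.apply_symm_apply]⟩
  rw [cyclicSumEquiv_inl, cyclicSumEquiv_inr]
  exact sub_mod_add_lt_of_odd hodd hb ha q.2 r.2

end cyclicInterval

theorem submatrix_eq_of_C_mul_X_pow {n : ℕ} {A : Matrix (Fin 2 × Fin n) (Fin n) ℂ[X]}
    (hA0 : ∀ (l c : Fin n),
      A (0, l) c = Polynomial.C (xi n ^ ((c : ℕ) * (l : ℕ))) * X ^ (c : ℕ))
    (hA1 : ∀ (l c : Fin n),
      A (1, l) c = Polynomial.C (xi n ^ ((c : ℕ) * (l : ℕ))) * X ^ ((n - (c : ℕ)) % n))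
    (rows : Fin n → Fin 2 × Fin n) :
    A.submatrix rows id = Matrix.of fun k (i : Fin n) =>
      C (xi n ^ ((i : ℕ) * ((rows k).2 : ℕ))) *
        X ^ (if k ∈ univ.filter (fun k => (rows k).1 = 1) then (n - i) % n else (i : ℕ)) := by
  ext k i : 1
  rcases h : rows k with ⟨t, l⟩
  fin_cases t <;> simp [h, hA0, hA1]

theorem minors_of_orbit_matrix_nonzero_general
    (n : ℕ) (hodd : Odd n)
    (A : Matrix (Fin 2 × Fin n) (Fin n) ℂ[X])
    (hA0 : ∀ (l c : Fin n),
      A (0, l) c = Polynomial.C (xi n ^ ((c : ℕ) * (l : ℕ))) * X ^ (c : ℕ))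
    (hA1 : ∀ (l c : Fin n),
      A (1, l) c = Polynomial.C (xi n ^ ((c : ℕ) * (l : ℕ))) * X ^ ((n - (c : ℕ)) % n)) :
    ∀ rows : Fin n → Fin 2 × Fin n, Function.Injective rows →
      (A.submatrix rows id).det ≠ 0 := by
  intro rows hrows
  have : NeZero n := ⟨hodd.pos.ne'⟩
  set S := univ.filter fun k => (rows k).1 = 1
  have hb : #S ≤ n := (card_le_univ S).trans_eq (Fintype.card_fin n)
  set a := if 2 * #S < n then 1 else 0 with ha
  set T := cyclicInterval n a #S hb
  obtain ⟨eR, hR⟩ := S.exists_sumEquiv_isLeft_iff_mem (Fintype.card_fin n)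
  have hl : ∀ k k', (k ∈ S ↔ k' ∈ S) → (rows k).2 = (rows k').2 → k = k' := fun k k' hS hl => by
    refine hrows (Prod.ext ?_ hl)
    simp only [S, mem_filter, mem_univ, true_and] at hS
    omega
  have hinj₁ : Function.Injective fun p => (rows (eR (.inl p))).2 := fun p p' h =>
    Sum.inl_injective (eR.injective (hl _ _ (by simp [hR]) h))
  have hinj₂ : Function.Injective fun r => (rows (eR (.inr r))).2 := fun r r' h =>
    Sum.inr_injective (eR.injective (hl _ _ (by simp [hR]) h))
  have hprim : IsPrimitiveRoot (xi n) n := Complex.isPrimitiveRoot_exp n hodd.pos.ne'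
  have htop := Matrix.coeff_det_of_C_mul_X_pow (fun k (i : Fin n) => xi n ^ ((i : ℕ) * (rows k).2))
    (fun k i => if k ∈ S then (n - i) % n else i) (fun k i => k ∈ S ↔ i ∈ T)
    (∑ i, if i ∈ T then (n - i) % n else i)
    (sum_ite_perm_mem_eq_iff (card_cyclicInterval.symm)
      fun x hx y hy => sub_mod_add_lt_of_mem_cyclicInterval hodd ha hx hy)
  have hG := Matrix.det_ite_mem_iff_ne_zero (fun k (i : Fin n) => xi n ^ ((i : ℕ) * (rows k).2))
    eR (cyclicSumEquiv n a #S hb) hR cyclicSumEquiv_mem_cyclicInterval_iff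
    (by simpa [cyclicSumEquiv_inl] using hprim.det_pow_mod_mul_ne_zero a hinj₁)
    (by simpa [cyclicSumEquiv_inr] using hprim.det_pow_mod_mul_ne_zero (a + #S) hinj₂)
  rw [submatrix_eq_of_C_mul_X_pow hA0 hA1]
  exact fun h0 => hG (by rw [← htop, h0, coeff_zero])

theorem minors_of_orbit_matrix_nonzero
    (n : ℕ) (hn : 2 < n) (hodd : Odd n)
    (A : Matrix (Fin 2 × Fin n) (Fin n) ℂ[X])
    (hA0 : ∀ (l c : Fin n),
      A (0, l) c = Polynomial.C (xi n ^ ((c : ℕ) * (l : ℕ))) * X ^ (c : ℕ))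
    (hA1 : ∀ (l c : Fin n),
      A (1, l) c = Polynomial.C (xi n ^ ((c : ℕ) * (l : ℕ))) * X ^ ((n - (c : ℕ)) % n)) :
    ∀ rows : Fin n → Fin 2 × Fin n, Function.Injective rows →
      (A.submatrix rows id).det ≠ 0 :=
  minors_of_orbit_matrix_nonzero_general n hodd A hA0 hA1
end

section
/- Let n be a prime number and ξ = exp(2πi/n). Let F be the n×n discrete Fourier matrix with entries F_{j,k} = ξ^{jk} for 0 ≤ j, k ≤ n−1. Then every minor of F is nonzero: for every 1 ≤ r ≤ n and all subsets R, C ⊆ {0,…,n−1} with |R| = |C| = r, the determinant of the r×r submatrix of F with rows R and columns C is nonzero. -/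
open Finset Polynomial Matrix

namespace Finset

theorem sum_range_card_le_sum (s : Finset ℕ) : ∑ i ∈ range #s, i ≤ ∑ x ∈ s, x := by
  induction s using Finset.induction_on_max with
  | empty => simp
  | insert a s hlt ih =>
    have ha : a ∉ s := fun h => (hlt a h).false
    have hcard : #s ≤ a := by simpa using card_le_card (fun x hx => mem_range.2 (hlt x hx))
    rw [card_insert_of_notMem ha, sum_range_succ, sum_insert ha]
    omega

theorem sum_range_card_lt_sum {s : Finset ℕ} (hs : ¬s ⊆ range #s) :
    ∑ i ∈ range #s, i < ∑ x ∈ s, x := by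
  induction s using Finset.induction_on_max with
  | empty => simp at hs
  | insert a s hlt ih =>
    have ha : a ∉ s := fun h => (hlt a h).false
    have hcard : #s ≤ a := by simpa using card_le_card (fun x hx => mem_range.2 (hlt x hx))
    rw [card_insert_of_notMem ha, sum_range_succ, sum_insert ha]
    by_cases hsub : s ⊆ range #s
    · have : #s < a := by
        refine hcard.lt_of_ne fun h => hs ?_
        rw [card_insert_of_notMem ha, range_add_one, h]
        exact insert_subset_insert a (h ▸ hsub)
      have := sum_range_card_le_sum s
      omega
    · have := ih hsub
      omega

end Finset

theorem Fin.sum_range_lt_sum_of_injective {r : ℕ} {f : Fin r → ℕ} (hf : Function.Injective f)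
    (hr : ∃ i, r ≤ f i) : ∑ i ∈ range r, i < ∑ i, f i := by
  have hcard : #(univ.image f) = r := by simp [card_image_of_injective _ hf]
  have hsum : ∑ x ∈ univ.image f, x = ∑ i, f i := sum_image fun i _ j _ h => hf h
  have key := sum_range_card_lt_sum (s := univ.image f) fun hsub => ?_
  · rwa [hcard, hsum] at key
  obtain ⟨i, hi⟩ := hr
  have := mem_range.1 (hsub (mem_image_of_mem f (mem_univ i)))
  omega

theorem Matrix.det_mul_eq_sum_prod_mul_det_submatrix {n ι R : Type*} [Fintype n] [DecidableEq n]
    [Fintype ι] [CommRing R] (A : Matrix n ι R) (B : Matrix ι n R) :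
    (A * B).det = ∑ f : n → ι, (∏ i, A i (f i)) * (B.submatrix f id).det := by
  have hrows : (fun i => ∑ l, A i l • B l) = A * B := by
    ext i j; simp [Matrix.mul_apply]
  have := (detRowAlternating (n := n) (R := R)).toMultilinearMap.map_sum fun i l => A i l • B l
  rw [AlternatingMap.coe_multilinearMap, hrows] at this
  refine this.trans (sum_congr rfl fun f _ => ?_)
  exact detRowAlternating.map_smul_univ (fun i => A i (f i)) fun i => B (f i)

theorem Matrix.det_submatrix_X_pow_mul {R n ι : Type*} [CommRing R] [Fintype n] [DecidableEq n]
    (w : ι → ℕ) (Z : Matrix ι n R[X]) (f : n → ι) :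
    ((of fun l j => X ^ w l * Z l j).submatrix f id).det =
      X ^ (∑ i, w (f i)) * (Z.submatrix f id).det := by
  rw [← prod_pow_eq_pow_sum, ← det_mul_column]
  rfl

theorem Matrix.X_pow_succ_dvd_det_mul_sub {R : Type*} [CommRing R] {r N : ℕ} (h : r ≤ N)
    (A : Matrix (Fin r) (Fin N) R) (Z : Matrix (Fin N) (Fin r) R[X]) :
    X ^ (∑ i ∈ range r, i + 1) ∣ (A.map C * of fun (l : Fin N) j => X ^ (l : ℕ) * Z l j).det -
      X ^ (∑ i ∈ range r, i) *
        (C (A.submatrix id (Fin.castLE h)).det * (Z.submatrix (Fin.castLE h) id).det) := by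
  set m := ∑ i ∈ range r, i
  set e := Fin.castLE h
  set Y : Matrix (Fin N) (Fin r) R[X] := of fun l j => X ^ (l : ℕ) * Z l j
  set T : (Fin r → Fin N) → R[X] := fun f =>
    (∏ i, C (A i (f i))) * (X ^ (∑ i, (f i : ℕ)) * (Z.submatrix f id).det)
  have hfull : (A.map C * Y).det = ∑ f, T f := by
    rw [det_mul_eq_sum_prod_mul_det_submatrix]
    simp only [det_submatrix_X_pow_mul, map_apply, T, Y]
  -- The choices `f` with values in `Fin r` reassemble into the square product `A_r * Y_r`.
  have hsquare : X ^ m * (C (A.submatrix id e).det * (Z.submatrix e id).det) =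
      ∑ g : Fin r → Fin r, T (e ∘ g) := by
    have hYe := det_submatrix_X_pow_mul (fun l : Fin N => (l : ℕ)) Z e
    simp only [e, Fin.val_castLE, Fin.sum_univ_eq_sum_range (fun i => i)] at hYe
    rw [mul_left_comm, RingHom.map_det, ← hYe, ← det_mul, det_mul_eq_sum_prod_mul_det_submatrix]
    refine sum_congr rfl fun g _ => ?_
    rw [submatrix_submatrix]
    exact congrArg₂ (· * ·) rfl (det_submatrix_X_pow_mul _ Z (e ∘ g))
  have he : Function.Injective fun g : Fin r → Fin r => e ∘ g :=
    (Fin.castLE_injective h).comp_left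
  have hmap : ∑ g, T (e ∘ g) = ∑ f ∈ univ.map ⟨_, he⟩, T f := by
    rw [sum_map]; rfl
  rw [hfull, hsquare, hmap, ← sum_sdiff (subset_univ _), add_sub_cancel_right]
  refine dvd_sum fun f hf => ?_
  have hlarge : ∃ i, r ≤ (f i : ℕ) := by
    by_contra! hsmall
    exact (mem_sdiff.1 hf).2 (mem_map.2 ⟨fun i => ⟨f i, hsmall i⟩, mem_univ _, rfl⟩)
  by_cases hinj : Function.Injective f
  · have hlt := Fin.sum_range_lt_sum_of_injective (Fin.val_injective.comp hinj) hlarge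
    exact dvd_mul_of_dvd_right (dvd_mul_of_dvd_left (pow_dvd_pow X hlt) _) _
  · obtain ⟨i, j, hij, hne⟩ := Function.not_injective_iff.1 hinj
    have hzero : (Z.submatrix f id).det = 0 := det_zero_of_row_eq hne (by ext; simp [hij])
    simp [T, hzero]

theorem one_add_pow_eq_sum_fin {R : Type*} [CommSemiring R] (y : R) {a N : ℕ} (ha : a < N) :
    (1 + y) ^ a = ∑ l : Fin N, (a.choose l : R) * y ^ (l : ℕ) := by
  rw [add_comm, add_pow, Fin.sum_univ_eq_sum_range (fun l => (a.choose l : R) * y ^ l)]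
  refine sum_subset (range_subset_range.2 ha) (fun l _ hl => ?_) |>.trans ?_
  · simp [Nat.choose_eq_zero_of_lt (by simpa using hl : a < l)]
  · exact sum_congr rfl fun l _ => by ring

theorem Polynomial.one_add_X_pow_eq (R : Type*) [CommRing R] (c : ℕ) :
    (1 + X : R[X]) ^ c = 1 + X * divX ((1 + X) ^ c) := by
  conv_lhs => rw [← divX_mul_X_add ((1 + X : R[X]) ^ c)]
  simp [coeff_one_add_X_pow, mul_comm, add_comm]

theorem Polynomial.eval_zero_divX_one_add_X_pow (R : Type*) [CommRing R] (c : ℕ) :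
    (divX ((1 + X : R[X]) ^ c)).eval 0 = c := by
  simp [← coeff_zero_eq_eval_zero, coeff_divX, coeff_one_add_X_pow]

theorem Matrix.det_vandermonde_eq_prod_factorial_mul_det_choose {r : ℕ} (v : Fin r → ℕ) :
    (vandermonde fun i => (v i : ℤ)).det =
      (∏ l : Fin r, ((l : ℕ).factorial : ℤ)) *
        (of fun i (l : Fin r) => ((v i).choose l : ℤ)).det := by
  rw [det_eval_matrixOfPolynomials_eq_det_vandermonde _ (fun l => descPochhammer ℤ l)
    (fun l => descPochhammer_natDegree ℤ l) (fun l => monic_descPochhammer ℤ l), ← det_mul_row]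
  congr 1
  ext i l
  simp [descPochhammer_eval_eq_descFactorial, Nat.descFactorial_eq_factorial_mul_choose]

theorem Matrix.not_dvd_det_vandermonde {p r : ℕ} (hp : p.Prime) {v : Fin r → ℕ}
    (hv : Function.Injective v) (hvp : ∀ i, v i < p) :
    ¬(p : ℤ) ∣ (vandermonde fun i => (v i : ℤ)).det := by
  rw [det_vandermonde, (Nat.prime_iff_prime_int.1 hp).dvd_finsetProd_iff]
  rintro ⟨i, -, hi⟩
  obtain ⟨j, hj, hdvd⟩ := (Nat.prime_iff_prime_int.1 hp).dvd_finsetProd_iff _ |>.1 hi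
  have hne : (v j : ℤ) - v i ≠ 0 := sub_ne_zero.2 (by exact_mod_cast hv.ne (mem_Ioi.1 hj).ne')
  refine hne (Int.eq_zero_of_abs_lt_dvd hdvd ?_)
  have := hvp i; have := hvp j
  rw [abs_lt]; constructor <;> omega

theorem IsPrimitiveRoot.prime_dvd_eval_zero {K : Type*} [Field K] [CharZero K] {p : ℕ}
    [Fact p.Prime] {ζ : K} (hζ : IsPrimitiveRoot ζ p) {g : ℤ[X]} (hg : aeval (ζ - 1) g = 0) :
    (p : ℤ) ∣ g.eval 0 := by
  have hp := (Fact.out : p.Prime).pos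
  have hroot : aeval ζ (g.comp (X - 1)) = 0 := by simpa [aeval_comp] using hg
  have hdvd := minpoly.isIntegrallyClosed_dvd (hζ.isIntegral hp) hroot
  rw [← cyclotomic_eq_minpoly hζ hp] at hdvd
  simpa [eval_one_cyclotomic_prime] using eval_dvd (x := 1) hdvd

theorem Polynomial.exists_det_one_add_X_pow_mul_eq {r N : ℕ} (hr : r ≤ N) (a c : Fin r → ℕ)
    (haN : ∀ i, a i < N) :
    ∃ g : ℤ[X], (of fun i j => (1 + X : ℤ[X]) ^ (a i * c j)).det = X ^ (∑ i ∈ range r, i) * g ∧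
      g.eval 0 = (of fun i (l : Fin r) => ((a i).choose l : ℤ)).det *
        (vandermonde fun j => (c j : ℤ)).det := by
  set A : Matrix (Fin r) (Fin N) ℤ := of fun i l => ((a i).choose l : ℤ)
  set Z : Matrix (Fin N) (Fin r) ℤ[X] := of fun l j => divX ((1 + X) ^ c j) ^ (l : ℕ)
  have hexpand : (of fun i j => (1 + X : ℤ[X]) ^ (a i * c j)) =
      A.map C * of fun (l : Fin N) j => X ^ (l : ℕ) * Z l j := by
    ext i j
    rw [of_apply, pow_mul', one_add_X_pow_eq, one_add_pow_eq_sum_fin _ (haN i)]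
    simp [mul_apply, A, Z, mul_pow]
  obtain ⟨S, hS⟩ := X_pow_succ_dvd_det_mul_sub hr A Z
  refine ⟨C (A.submatrix id (Fin.castLE hr)).det * (Z.submatrix (Fin.castLE hr) id).det + X * S,
    ?_, ?_⟩
  · rw [hexpand, sub_eq_iff_eq_add.1 hS]
    ring
  · rw [eval_add, eval_mul, eval_C, eval_mul, eval_X, zero_mul, add_zero, ← coe_evalRingHom,
      RingHom.map_det, ← det_transpose (vandermonde _)]
    congr 2
    ext l j
    simp [Z, eval_zero_divX_one_add_X_pow]

theorem IsPrimitiveRoot.det_pow_mul_ne_zero {K : Type*} [Field K] [CharZero K] {p : ℕ}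
    [hp : Fact p.Prime] {ζ : K} (hζ : IsPrimitiveRoot ζ p) {r : ℕ} {a c : Fin r → ℕ}
    (ha : Function.Injective a) (hc : Function.Injective c) (hap : ∀ i, a i < p)
    (hcp : ∀ i, c i < p) :
    (of fun i j => ζ ^ (a i * c j)).det ≠ 0 := by
  have hr : r ≤ p := by
    simpa using Fintype.card_le_of_injective (fun i => (⟨a i, hap i⟩ : Fin p))
      fun i j h => ha (Fin.val_eq_of_eq h)
  obtain ⟨g, hD, hg0⟩ := exists_det_one_add_X_pow_mul_eq hr a c hap
  have hζ1 : ζ - 1 ≠ 0 := sub_ne_zero.2 (hζ.ne_one hp.out.one_lt)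
  have hspecialize : (of fun i j => ζ ^ (a i * c j)).det =
      (ζ - 1) ^ (∑ i ∈ range r, i) * aeval (ζ - 1) g := by
    have := congrArg (aeval (ζ - 1)) hD
    rw [AlgHom.map_det, map_mul, map_pow, aeval_X] at this
    rw [← this]
    congr 1
    ext i j
    simp
  intro hzero
  have hdvd := hζ.prime_dvd_eval_zero
    ((mul_eq_zero.1 (hspecialize ▸ hzero)).resolve_left (pow_ne_zero _ hζ1))
  rw [hg0] at hdvd
  rcases (Nat.prime_iff_prime_int.1 hp.out).dvd_or_dvd hdvd with hdvd | hdvd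
  · refine not_dvd_det_vandermonde hp.out ha hap ?_
    rw [det_vandermonde_eq_prod_factorial_mul_det_choose]
    exact dvd_mul_of_dvd_right hdvd _
  · exact not_dvd_det_vandermonde hp.out hc hcp hdvd

theorem chebotarev_minors_nonzero (n : ℕ) (hp : n.Prime)
    (F : Matrix (Fin n) (Fin n) ℂ)
    (hF : ∀ j k : Fin n, F j k = xi n ^ ((j : ℕ) * (k : ℕ))) :
    ∀ r : ℕ, 1 ≤ r → r ≤ n →
      ∀ (R Cc : Finset (Fin n)) (hR : R.card = r) (hC : Cc.card = r),
        (F.submatrix (fun i => (R.orderIsoOfFin hR i : Fin n))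
          (fun i => (Cc.orderIsoOfFin hC i : Fin n))).det ≠ 0 := by
  intro r _ _ R Cc hR hC
  have : Fact n.Prime := ⟨hp⟩
  have hξ : IsPrimitiveRoot (xi n) n := Complex.isPrimitiveRoot_exp n hp.ne_zero
  have hsub : F.submatrix (fun i => (R.orderIsoOfFin hR i : Fin n))
      (fun i => (Cc.orderIsoOfFin hC i : Fin n)) =
      of fun i j => xi n ^ ((R.orderIsoOfFin hR i : Fin n) * (Cc.orderIsoOfFin hC j : ℕ)) := by
    ext i j
    simp [hF]
  rw [hsub]
  exact hξ.det_pow_mul_ne_zero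
    (Fin.val_injective.comp (Subtype.val_injective.comp (R.orderIsoOfFin hR).injective))
    (Fin.val_injective.comp (Subtype.val_injective.comp (Cc.orderIsoOfFin hC).injective))
    (fun i => (R.orderIsoOfFin hR i : Fin n).isLt) (fun i => (Cc.orderIsoOfFin hC i : Fin n).isLt)
end
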